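/- Let Σ be an n×n positive semidefinite matrix and L an m×n matrix with LΣL† invertible, and G = ΣL†(LΣL†)^{-1}. Then GLΣ(GL)† = GLΣ, i.e. GLΣ is symmetric and GL acts as a projection on Σ in the sense that (GL)Σ(GL)† = (GL)Σ. -/

import Mathlib

open Matrix

namespace Matrix

variable {m n R : Type*} [Fintype n] [CommRing R]

theorem IsSymm.mul_mul_transpose {S : Matrix n n R} (hS : S.IsSymm) (L : Matrix m n R) :
    (L * S * Lᵀ).IsSymm := by
  simp only [IsSymm, transpose_mul, transpose_transpose, hS.eq, Matrix.mul_assoc]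

theorem IsSymm.transpose_mul_transpose_mul_inv_mul [Fintype m] [DecidableEq m]
    {S : Matrix n n R} (hS : S.IsSymm) (L : Matrix m n R) :
    (S * Lᵀ * (L * S * Lᵀ)⁻¹ * L)ᵀ = Lᵀ * (L * S * Lᵀ)⁻¹ * L * S := by
  simp only [transpose_mul, transpose_transpose, hS.eq, (hS.mul_mul_transpose L).inv.eq]
  simp only [Matrix.mul_assoc]

theorem IsSymm.mul_transpose_mul_inv_mul_mul_transpose [Fintype m] [DecidableEq m]
    {S : Matrix n n R} (hS : S.IsSymm) {L : Matrix m n R} (hA : IsUnit (L * S * Lᵀ)) :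
    S * Lᵀ * (L * S * Lᵀ)⁻¹ * L * S * (S * Lᵀ * (L * S * Lᵀ)⁻¹ * L)ᵀ
      = S * Lᵀ * (L * S * Lᵀ)⁻¹ * L * S := by
  rw [hS.transpose_mul_transpose_mul_inv_mul]
  calc S * Lᵀ * (L * S * Lᵀ)⁻¹ * L * S * (Lᵀ * (L * S * Lᵀ)⁻¹ * L * S)
      = S * Lᵀ * (L * S * Lᵀ)⁻¹ * (L * S * Lᵀ * (L * S * Lᵀ)⁻¹) * L * S := by
        simp only [Matrix.mul_assoc]
    _ = S * Lᵀ * (L * S * Lᵀ)⁻¹ * L * S := by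
        rw [mul_nonsing_inv _ ((isUnit_iff_isUnit_det _).mp hA), Matrix.mul_one]

end Matrix

/-- With Σ PSD, L with LΣL† invertible, and G = ΣL†(LΣL†)⁻¹, we have GLΣ(GL)† = GLΣ,
i.e. GLΣ is symmetric and GL acts as a projection on Σ. -/
theorem stmt_2 {n m : ℕ} (S : Matrix (Fin n) (Fin n) ℝ) (L : Matrix (Fin m) (Fin n) ℝ)
    (hS : S.PosSemidef) (hinv : IsUnit (L * S * Lᵀ)) :
    ((S * Lᵀ * (L * S * Lᵀ)⁻¹) * L) * S * ((S * Lᵀ * (L * S * Lᵀ)⁻¹) * L)ᵀ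
      = ((S * Lᵀ * (L * S * Lᵀ)⁻¹) * L) * S := by
  have hSymm : S.IsSymm := by
    simpa only [IsSymm, conjTranspose_eq_transpose_of_trivial] using hS.isHermitian.eq
  exact hSymm.mul_transpose_mul_inv_mul_mul_transpose hinv
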